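/- arXiv:cond-mat/9604052 — 2 statements merged into one kernel-verified Lean document; each statement's English description precedes it below -/
import Mathlib

section
/- Let D = (V, E) be a finite directed graph and for each edge e = (i, j) ∈ E let θ_e : ℤ → ℝ be convex. Suppose x : E → ℤ is dual feasible with potential function π : V → ℝ, i.e. for every edge e = (i, j) one has θ_e(x_e + 1) − θ_e(x_e) − π_j + π_i ≥ 0 and θ_e(x_e − 1) − θ_e(x_e) + π_j − π_i ≥ 0. Then for every integer circulation y : E → ℤ (i.e. g_v(y) = 0 for all v ∈ V) one has Σ_{e∈E} θ_e(y_e) ≥ Σ_{e∈E} θ_e(x_e) + Σ_{v∈V} π_v · g_v(x). -/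
/-!
Summing over `e` the supporting-line inequality
`θ_e(y_e) ≥ θ_e(x_e) + (y_e - x_e)(π_{h e} - π_{t e})`, which holds because dual feasibility says
exactly that `π_{h e} - π_{t e}` lies between the left and right differences of the convex
`θ_e` at `x_e`, gives the claim: regrouped by vertex, the potential terms add up to
`Σ_v π_v (g_v(x) - g_v(y))`, and `g(y) = 0`.
-/

/-- The excess of vertex `v` for the vector `x : E → ℤ` in a directed graph with
tail map `t` and head map `h`:
`g_v(x) = Σ_{e : t e = v} x e − Σ_{e : h e = v} x e`. -/
def excess {V E : Type*} [Fintype E] [DecidableEq V]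
    (t h : E → V) (x : E → ℤ) (v : V) : ℤ :=
  (∑ e : E, if t e = v then x e else 0) - (∑ e : E, if h e = v then x e else 0)

section DiscreteConvex

variable {R : Type*} [CommRing R] [LinearOrder R] [IsStrictOrderedRing R]
  {f : ℤ → R} {a : ℤ} {c : R}

lemma add_mul_sub_le_of_le (hf : ∀ z, 2 * f z ≤ f (z + 1) + f (z - 1))
    (hc : c ≤ f (a + 1) - f a) {b : ℤ} (hab : a ≤ b) :
    f a + ((b - a : ℤ) : R) * c ≤ f b := by
  suffices f a + ((b - a : ℤ) : R) * c ≤ f b ∧ c ≤ f (b + 1) - f b from this.1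
  induction b, hab using Int.leInduction with
  | base => simpa using hc
  | succ b _ ih =>
    have hfb := hf (b + 1)
    rw [add_sub_cancel_right] at hfb
    push_cast at ih ⊢
    constructor <;> linarith

lemma add_mul_sub_le_of_ge (hf : ∀ z, 2 * f z ≤ f (z + 1) + f (z - 1))
    (hc : f a - f (a - 1) ≤ c) {b : ℤ} (hba : b ≤ a) :
    f a + ((b - a : ℤ) : R) * c ≤ f b := by
  suffices f a + ((b - a : ℤ) : R) * c ≤ f b ∧ f b - f (b - 1) ≤ c from this.1
  induction b, hba using Int.leInductionDown with
  | base => simpa using hc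
  | pred b _ ih =>
    have hfb := hf (b - 1)
    rw [sub_add_cancel] at hfb
    push_cast at ih ⊢
    constructor <;> linarith

/-- A slope between the left and right differences of a discrete convex function at `a`
gives a supporting line at `a`. -/
lemma add_mul_sub_le (hf : ∀ z, 2 * f z ≤ f (z + 1) + f (z - 1))
    (hc₁ : c ≤ f (a + 1) - f a) (hc₂ : f a - f (a - 1) ≤ c) (b : ℤ) :
    f a + ((b - a : ℤ) : R) * c ≤ f b :=
  (le_total a b).elim (add_mul_sub_le_of_le hf hc₁) (add_mul_sub_le_of_ge hf hc₂)

end DiscreteConvex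

lemma sum_mul_excess {V E R : Type*} [Fintype V] [Fintype E] [DecidableEq V] [CommRing R]
    (t h : E → V) (x : E → ℤ) (π : V → R) :
    ∑ v, π v * (excess t h x v : R) = ∑ e, (x e : R) * (π (t e) - π (h e)) := by
  simp only [excess, Int.cast_sub, Int.cast_sum, apply_ite (Int.cast : ℤ → R), Int.cast_zero,
    mul_sub, Finset.mul_sum, mul_ite, mul_zero, Finset.sum_sub_distrib]
  rw [Finset.sum_comm, Finset.sum_comm (γ := V)]
  simp [mul_comm]

/-- If `x : E → ℤ` is dual feasible with potentials `π : V → ℝ` for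
edgewise convex costs `θ`, then every integer circulation `y` satisfies
`Σ_e θ_e (y e) ≥ Σ_e θ_e (x e) + Σ_v π v * g_v(x)`. -/
theorem stmt2 {V E : Type*} [Fintype V] [Fintype E] [DecidableEq V]
    (t h : E → V) (θ : E → ℤ → ℝ)
    (hconv : ∀ (e : E) (z : ℤ), θ e (z + 1) + θ e (z - 1) ≥ 2 * θ e z)
    (x : E → ℤ) (π : V → ℝ)
    (hfeas : ∀ e : E,
      θ e (x e + 1) - θ e (x e) - π (h e) + π (t e) ≥ 0 ∧
      θ e (x e - 1) - θ e (x e) + π (h e) - π (t e) ≥ 0)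
    (y : E → ℤ) (hy : ∀ v : V, excess t h y v = 0) :
    ∑ e : E, θ e (y e) ≥
      (∑ e : E, θ e (x e)) + ∑ v : V, π v * ((excess t h x v : ℤ) : ℝ) := by
  have hedge (e : E) :
      θ e (x e) + ((y e - x e : ℤ) : ℝ) * (π (h e) - π (t e)) ≤ θ e (y e) :=
    add_mul_sub_le (hconv e) (by linarith [(hfeas e).1]) (by linarith [(hfeas e).2]) (y e)
  have hpot : ∑ e, ((y e - x e : ℤ) : ℝ) * (π (h e) - π (t e))
      = ∑ v, π v * (excess t h x v : ℝ) - ∑ v, π v * (excess t h y v : ℝ) := by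
    rw [sum_mul_excess, sum_mul_excess, ← Finset.sum_sub_distrib]
    refine Finset.sum_congr rfl fun e _ => ?_
    push_cast
    ring
  simp only [hy, Int.cast_zero, mul_zero, Finset.sum_const_zero, sub_zero] at hpot
  calc (∑ e, θ e (x e)) + ∑ v, π v * (excess t h x v : ℝ)
      = ∑ e, (θ e (x e) + ((y e - x e : ℤ) : ℝ) * (π (h e) - π (t e))) := by
        rw [Finset.sum_add_distrib, hpot]
    _ ≤ ∑ e, θ e (y e) := Finset.sum_le_sum fun e _ => hedge e
end

section
/- Let D = (V, E) be a finite directed graph and for each edge e = (i, j) ∈ E let θ_e : ℤ → ℝ be convex. If x : E → ℤ is a circulation (g_v(x) = 0 for all v ∈ V) and x is dual feasible, then x is an optimal solution of the convex minimum-circulation problem: Σ_{e∈E} θ_e(x_e) ≤ Σ_{e∈E} θ_e(y_e) for every integer circulation y : E → ℤ. -/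
lemma slope_up (θ : ℤ → ℝ) (hconv : ∀ z, θ (z+1) + θ (z-1) ≥ 2 * θ z)
    (x : ℤ) (c : ℝ) (h1 : θ (x+1) - θ x ≥ c) :
    ∀ n : ℕ, θ (x + n + 1) - θ (x + n) ≥ c := by
  intro n
  induction n with
  | zero => simpa using h1
  | succ k ih =>
    have h := hconv (x + k + 1)
    have e1 : x + k + 1 - 1 = x + k := by ring
    have e2 : x + (k+1 : ℕ) = x + k + 1 := by push_cast; ring
    rw [e1] at h
    rw [e2]
    linarith

lemma conv_up (θ : ℤ → ℝ) (hconv : ∀ z, θ (z+1) + θ (z-1) ≥ 2 * θ z)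
    (x : ℤ) (c : ℝ) (h1 : θ (x+1) - θ x ≥ c) :
    ∀ y, x ≤ y → θ y ≥ θ x + c * (y - x) := by
  have main : ∀ n : ℕ, θ (x + n) ≥ θ x + c * n := by
    intro n
    induction n with
    | zero => simp
    | succ k ih =>
      have hs := slope_up θ hconv x c h1 k
      have e2 : x + (k+1 : ℕ) = x + k + 1 := by push_cast; ring
      have e3 : ((k+1 : ℕ) : ℝ) = (k : ℝ) + 1 := by push_cast; ring
      rw [e2, e3]
      nlinarith
  intro y hy
  obtain ⟨n, rfl⟩ : ∃ n : ℕ, y = x + n :=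
    ⟨(y - x).toNat, by omega⟩
  have := main n
  have e : ((x + n : ℤ) : ℝ) - (x : ℝ) = (n : ℝ) := by push_cast; ring
  rw [e]
  exact this

lemma conv_lb (θ : ℤ → ℝ) (hconv : ∀ z, θ (z+1) + θ (z-1) ≥ 2 * θ z)
    (x : ℤ) (c : ℝ) (h1 : θ (x+1) - θ x ≥ c) (h2 : θ (x-1) - θ x ≥ -c) :
    ∀ y, θ y ≥ θ x + c * (y - x) := by
  intro y
  rcases le_total x y with hy | hy
  · exact conv_up θ hconv x c h1 y hy
  · -- reflect
    set ψ : ℤ → ℝ := fun z => θ (-z) with hψ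
    have hψconv : ∀ z, ψ (z+1) + ψ (z-1) ≥ 2 * ψ z := by
      intro z
      have := hconv (-z)
      simp only [hψ]
      have e1 : -(z+1) = -z - 1 := by ring
      have e2 : -(z-1) = -z + 1 := by ring
      rw [e1, e2]
      linarith
    have hψ1 : ψ (-x+1) - ψ (-x) ≥ -c := by
      simp only [hψ]
      have e1 : -(-x+1) = x - 1 := by ring
      have e2 : -(-x) = x := by ring
      rw [e1, e2]; linarith
    have := conv_up ψ hψconv (-x) (-c) hψ1 (-y) (by omega)
    simp only [hψ, neg_neg] at this
    have ec : ((-y : ℤ) : ℝ) - ((-x : ℤ) : ℝ) = -(((y:ℤ):ℝ) - ((x:ℤ):ℝ)) := by push_cast; ring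
    rw [ec] at this
    have ee : -c * -(((y:ℤ):ℝ) - ((x:ℤ):ℝ)) = c * (((y:ℤ):ℝ) - ((x:ℤ):ℝ)) := by ring
    linarith [this, ee.le, ee.ge]

/-- If `x : E → ℤ` is a circulation and is dual feasible for the
edgewise convex costs `θ`, then `x` is an optimal solution of the convex
minimum-circulation problem. -/
theorem stmt3 {V E : Type*} [Fintype V] [Fintype E] [DecidableEq V]
    (t h : E → V) (θ : E → ℤ → ℝ)
    (hconv : ∀ (e : E) (z : ℤ), θ e (z + 1) + θ e (z - 1) ≥ 2 * θ e z)
    (x : E → ℤ) (hx : ∀ v : V, excess t h x v = 0)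
    (hfeas : ∃ π : V → ℝ, ∀ e : E,
      θ e (x e + 1) - θ e (x e) - π (h e) + π (t e) ≥ 0 ∧
      θ e (x e - 1) - θ e (x e) + π (h e) - π (t e) ≥ 0) :
    ∀ y : E → ℤ, (∀ v : V, excess t h y v = 0) →
      ∑ e : E, θ e (x e) ≤ ∑ e : E, θ e (y e) := by
  obtain ⟨π, hπ⟩ := hfeas
  intro y hy
  set c : E → ℝ := fun e => π (h e) - π (t e) with hc
  set z : E → ℝ := fun e => ((y e - x e : ℤ) : ℝ) with hz
  -- edgewise bound
  have edge : ∀ e, θ e (y e) ≥ θ e (x e) + c e * z e := by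
    intro e
    have h1 : θ e (x e + 1) - θ e (x e) ≥ c e := by
      have := (hπ e).1; simp only [hc]; linarith
    have h2 : θ e (x e - 1) - θ e (x e) ≥ -(c e) := by
      have := (hπ e).2; simp only [hc]; linarith
    have := conv_lb (θ e) (hconv e) (x e) (c e) h1 h2 (y e)
    simp only [hz]
    push_cast
    push_cast at this
    linarith
  -- sum of c e * z e is zero
  have key : ∀ (f : E → V), ∑ e, z e * π (f e)
      = ∑ v, π v * ∑ e, if f e = v then z e else 0 := by
    intro f
    have : ∀ e, z e * π (f e) = ∑ v, if f e = v then z e * π v else 0 := by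
      intro e
      rw [Finset.sum_ite_eq Finset.univ (f e) (fun v => z e * π v)]
      simp
    simp_rw [this]
    rw [Finset.sum_comm]
    congr 1
    ext v
    rw [Finset.mul_sum]
    congr 1
    ext e
    split <;> ring
  have sums_eq : ∀ v, (∑ e, if t e = v then z e else 0)
      = (∑ e, if h e = v then z e else 0) := by
    intro v
    have hxv := hx v
    have hyv := hy v
    unfold excess at hxv hyv
    have : ((∑ e, if t e = v then y e - x e else 0 : ℤ) : ℝ)
        = ((∑ e, if h e = v then y e - x e else 0 : ℤ) : ℝ) := by
      congr 1
      have split : ∀ (f : E → V), (∑ e, if f e = v then y e - x e else 0)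
          = (∑ e, if f e = v then y e else 0) - (∑ e, if f e = v then x e else 0) := by
        intro f
        rw [← Finset.sum_sub_distrib]
        congr 1; ext e; split <;> simp
      rw [split t, split h]
      omega
    simpa [hz, Int.cast_sum, apply_ite (fun n : ℤ => (n : ℝ))] using this
  have zero_sum : ∑ e, c e * z e = 0 := by
    have : ∑ e, c e * z e = ∑ e, z e * π (h e) - ∑ e, z e * π (t e) := by
      rw [← Finset.sum_sub_distrib]
      congr 1; ext e; simp only [hc]; ring
    rw [this, key h, key t]
    rw [← Finset.sum_sub_distrib]
    apply Finset.sum_eq_zero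
    intro v _
    rw [sums_eq v]
    ring
  have := Finset.sum_le_sum (fun e (_ : e ∈ Finset.univ) => edge e)
  calc ∑ e, θ e (x e) = ∑ e, (θ e (x e) + c e * z e) - ∑ e, c e * z e := by
        rw [Finset.sum_add_distrib]; ring
    _ ≤ ∑ e, θ e (y e) := by rw [zero_sum]; linarith
end
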